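/- Let D be a chord diagram containing a strong RII pair α = {i, j+1}, β = {i+1, j} (where i, i+1, j, j+1 are distinct points in this cyclic order), and let D' be obtained from D by deleting α and β. Then T(D) ≡ T(D') (mod 2). (This is the paper's claim that one strong RII move changes the triple-chord count by an even number.) -/

import Mathlib

/-!
The chords `α = {i, j+1}` and `β = {i+1, j}` are nested, so they do not cross, and no other
chord has an endpoint among `i, i+1, j, j+1`. Sliding an endpoint of `α` to the adjacent point
passes no endpoint of another chord, so every other chord crosses `α` iff it crosses `β`:
`α` and `β` are twins of the crossing relation. Hence no triple contains both of them, and the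
transposition `α ↔ β` matches the triples avoiding `β` with those avoiding `α`. Inclusion–exclusion
gives `T(D) + T(D') = T(D - α) + T(D - β) = 2 T(D - α)`.
-/

/-- A chord diagram on `2 * n` points: a fixed-point-free involution of `ZMod (2 * n)`.
Its two-element orbits are called chords; the points lie on a circle in their
natural cyclic order. -/
structure ChordDiagram (n : ℕ) where
  inv : ZMod (2 * n) → ZMod (2 * n)
  involutive : Function.Involutive inv
  fixedPointFree : ∀ x, inv x ≠ x

/-- A chord: an unordered pair of points of the circle `ZMod m`. -/
abbrev Chord (m : ℕ) := Sym2 (ZMod m)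

/-- `x` lies in the open cyclic arc running counterclockwise from `a` to `b`. -/
def InArc {m : ℕ} (a b x : ZMod m) : Prop :=
  0 < (x - a).val ∧ (x - a).val < (b - a).val

/-- Two chords cross: exactly one endpoint of the second lies in the open cyclic arc
bounded by the first. -/
def Chord.Crosses {m : ℕ} (e f : Chord m) : Prop :=
  ∃ a b c d : ZMod m, e = s(a, b) ∧ f = s(c, d) ∧ Xor' (InArc a b c) (InArc a b d)

/-- The set of chords of a chord diagram. -/
def ChordDiagram.chords {n : ℕ} (D : ChordDiagram n) : Set (Chord (2 * n)) :=
  {e | ∃ x, e = s(x, D.inv x)}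

/-- `P` is an (unordered) pair of crossing chords of `D`. -/
def ChordDiagram.IsCrossingPair {n : ℕ} (D : ChordDiagram n)
    (P : Finset (Chord (2 * n))) : Prop :=
  P.card = 2 ∧ (∀ e ∈ P, e ∈ D.chords) ∧
    ∀ e ∈ P, ∀ f ∈ P, e ≠ f → Chord.Crosses e f

/-- `P` is an (unordered) triple of pairwise crossing chords of `D`. -/
def ChordDiagram.IsTripleChord {n : ℕ} (D : ChordDiagram n)
    (P : Finset (Chord (2 * n))) : Prop :=
  P.card = 3 ∧ (∀ e ∈ P, e ∈ D.chords) ∧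
    ∀ e ∈ P, ∀ f ∈ P, e ≠ f → Chord.Crosses e f

/-- `P` is an H-triple of `D`: a triple `{a, b, c}` of chords of `D` such that `c`
crosses both `a` and `b` while `a` and `b` do not cross. -/
def ChordDiagram.IsHTriple {n : ℕ} (D : ChordDiagram n)
    (P : Finset (Chord (2 * n))) : Prop :=
  P.card = 3 ∧ (∀ e ∈ P, e ∈ D.chords) ∧
    ∃ c ∈ P, (∀ e ∈ P, e ≠ c → Chord.Crosses c e) ∧
      ∀ a ∈ P, ∀ b ∈ P, a ≠ c → b ≠ c → a ≠ b → ¬ Chord.Crosses a b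

/-- `X D`: the number of unordered pairs of chords of `D` that cross. -/
noncomputable def ChordDiagram.X {n : ℕ} (D : ChordDiagram n) : ℕ :=
  Set.ncard {P | D.IsCrossingPair P}

/-- `T D`: the number of unordered triples of chords of `D` that pairwise cross. -/
noncomputable def ChordDiagram.T {n : ℕ} (D : ChordDiagram n) : ℕ :=
  Set.ncard {P | D.IsTripleChord P}

/-- `H D`: the number of H-triples of `D`. -/
noncomputable def ChordDiagram.H {n : ℕ} (D : ChordDiagram n) : ℕ :=
  Set.ncard {P | D.IsHTriple P}

/-- `D'` is obtained from `D` by deleting the set `S` of chords: deletion removes the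
chords of `S` together with their endpoints and reindexes the remaining points
preserving their cyclic order; in particular it induces a bijection between the
remaining chords of `D` and the chords of `D'` preserving all crossing relations. -/
def ChordDiagram.DeletionOf {n n' : ℕ} (D : ChordDiagram n) (S : Set (Chord (2 * n)))
    (D' : ChordDiagram n') : Prop :=
  ∃ φ : {e : Chord (2 * n) // e ∈ D.chords ∧ e ∉ S} ≃
      {e : Chord (2 * n') // e ∈ D'.chords},
    ∀ e f, Chord.Crosses e.1 f.1 ↔ Chord.Crosses (φ e).1 (φ f).1

/-- Four points occurring in this (strict counterclockwise) cyclic order;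
in particular they are pairwise distinct. -/
def CyclicOrd4 {m : ℕ} (a b c d : ZMod m) : Prop :=
  0 < (b - a).val ∧ (b - a).val < (c - a).val ∧ (c - a).val < (d - a).val

/-- Six points occurring in this (strict counterclockwise) cyclic order;
in particular they are pairwise distinct. -/
def CyclicOrd6 {m : ℕ} (a b c d e f : ZMod m) : Prop :=
  0 < (b - a).val ∧ (b - a).val < (c - a).val ∧ (c - a).val < (d - a).val ∧
    (d - a).val < (e - a).val ∧ (e - a).val < (f - a).val

/-- `D` is evenly interlaced: every chord of `D` crosses an even number of chords
of `D` (true for the Gauss diagram of every knot projection). -/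
def ChordDiagram.EvenlyInterlaced {n : ℕ} (D : ChordDiagram n) : Prop :=
  ∀ e ∈ D.chords, Even (Set.ncard {f | f ∈ D.chords ∧ Chord.Crosses e f})

/-- Exactly two of the three propositions hold. -/
def ExactlyTwo (A B C : Prop) : Prop :=
  (A ∧ B ∧ ¬ C) ∨ (A ∧ ¬ B ∧ C) ∨ (¬ A ∧ B ∧ C)

/-- A strong RIII move: the three pairwise crossing chords `{p, q+1}`, `{q, r+1}`,
`{r, p+1}` (where `p, p+1, q, q+1, r, r+1` occur in this cyclic order) are replaced by
the three chords `{p+1, q}`, `{q+1, r}`, `{r+1, p}`, all other chords being unchanged. -/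
def ChordDiagram.StrongRIII {n : ℕ} (D D' : ChordDiagram n) : Prop :=
  ∃ p q r : ZMod (2 * n), CyclicOrd6 p (p + 1) q (q + 1) r (r + 1) ∧
    s(p, q + 1) ∈ D.chords ∧ s(q, r + 1) ∈ D.chords ∧ s(r, p + 1) ∈ D.chords ∧
    D'.chords = (D.chords \ {s(p, q + 1), s(q, r + 1), s(r, p + 1)}) ∪
      {s(p + 1, q), s(q + 1, r), s(r + 1, p)}

section Triangles

variable {X Y : Type*} {R : X → X → Prop} {C : Set X}

def triangles (C : Set X) (R : X → X → Prop) : Set (Finset X) :=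
  {P | P.card = 3 ∧ ↑P ⊆ C ∧ (P : Set X).Pairwise R}

lemma triangles_mono {C' : Set X} (h : C ⊆ C') : triangles C R ⊆ triangles C' R :=
  fun _ ⟨hcard, hsub, hpair⟩ => ⟨hcard, hsub.trans h, hpair⟩

lemma triangles_inter (C' : Set X) :
    triangles (C ∩ C') R = triangles C R ∩ triangles C' R :=
  (Set.subset_inter (triangles_mono Set.inter_subset_left)
    (triangles_mono Set.inter_subset_right)).antisymm
    fun _ ⟨⟨hcard, hsub, hpair⟩, ⟨_, hsub', _⟩⟩ => ⟨hcard, Set.subset_inter hsub hsub', hpair⟩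

lemma triangles_eq_union_of_not_rel {a b : X} (hab : a ≠ b) (h : ¬ R a b) :
    triangles C R = triangles (C \ {a}) R ∪ triangles (C \ {b}) R := by
  refine (Set.union_subset (triangles_mono Set.sdiff_subset)
    (triangles_mono Set.sdiff_subset)).antisymm' ?_
  rintro P ⟨hcard, hsub, hpair⟩
  by_cases ha : a ∈ P
  · have hb : b ∉ P := fun hb => h (hpair ha hb hab)
    exact .inr ⟨hcard, fun x hx => ⟨hsub hx, fun e => hb (e ▸ hx)⟩, hpair⟩
  · exact .inl ⟨hcard, fun x hx => ⟨hsub hx, fun e => ha (e ▸ hx)⟩, hpair⟩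

lemma ncard_triangles_add_ncard_triangles_diff_pair [Finite X] {a b : X} (hab : a ≠ b)
    (h : ¬ R a b) :
    (triangles C R).ncard + (triangles (C \ {a, b}) R).ncard =
      (triangles (C \ {a}) R).ncard + (triangles (C \ {b}) R).ncard := by
  rw [triangles_eq_union_of_not_rel hab h, ← Set.singleton_union, ← Set.sdiff_inter_sdiff,
    triangles_inter, Set.ncard_union_add_ncard_inter]

lemma ncard_triangles_image {R' : Y → Y → Prop} {f : X → Y} (hf : Set.InjOn f C)
    (hR : ∀ x ∈ C, ∀ y ∈ C, x ≠ y → (R' (f x) (f y) ↔ R x y)) :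
    (triangles (f '' C) R').ncard = (triangles C R).ncard := by
  classical
  have hinj : Set.InjOn (Finset.image f) (triangles C R) := fun P hP Q hQ hPQ => by
    rw [← Finset.coe_inj, ← hf.image_eq_image_iff hP.2.1 hQ.2.1, ← Finset.coe_image,
      ← Finset.coe_image, hPQ]
  have hpair : ∀ P : Finset X, ↑P ⊆ C →
      (((P.image f : Finset Y) : Set Y).Pairwise R' ↔ (P : Set X).Pairwise R) := by
    intro P hP
    rw [Finset.coe_image, (hf.mono hP).pairwise_image]
    exact ⟨fun h x hx y hy hxy => (hR x (hP hx) y (hP hy) hxy).1 (h hx hy hxy),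
      fun h x hx y hy hxy => (hR x (hP hx) y (hP hy) hxy).2 (h hx hy hxy)⟩
  have himage : Finset.image f '' triangles C R = triangles (f '' C) R' := by
    ext Q
    constructor
    · rintro ⟨P, ⟨hcard, hsub, hP⟩, rfl⟩
      refine ⟨?_, ?_, (hpair P hsub).2 hP⟩
      · rwa [Finset.card_image_of_injOn (hf.mono hsub)]
      · rw [Finset.coe_image]
        exact Set.image_mono hsub
    · rintro ⟨hcard, hsub, hQ⟩
      obtain ⟨P, hPC, rfl⟩ := Finset.subset_set_image_iff.1 hsub
      refine ⟨P, ⟨?_, hPC, (hpair P hPC).1 hQ⟩, rfl⟩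
      rwa [Finset.card_image_of_injOn (hf.mono hPC)] at hcard
  rw [← himage, hinj.ncard_image]

lemma ncard_triangles_eq_ncard_triangles_univ (C : Set X) (R : X → X → Prop) :
    (triangles C R).ncard = (triangles Set.univ fun x y : C => R x y).ncard := by
  rw [← ncard_triangles_image Subtype.val_injective.injOn (fun _ _ _ _ _ => Iff.rfl),
    Set.image_univ, Subtype.range_coe]

lemma ncard_triangles_congr {C' : Set Y} {R' : Y → Y → Prop} (φ : C ≃ C')
    (hφ : ∀ x y : C, R x y ↔ R' (φ x) (φ y)) :
    (triangles C R).ncard = (triangles C' R').ncard := by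
  rw [ncard_triangles_eq_ncard_triangles_univ, ncard_triangles_eq_ncard_triangles_univ C',
    ← Set.image_univ_of_surjective φ.surjective,
    ncard_triangles_image φ.injective.injOn fun x _ y _ _ => (hφ x y).symm]

lemma ncard_triangles_diff_singleton_eq_of_twins {a b : X} (ha : a ∈ C) (hb : b ∈ C)
    (htwin : ∀ x ∈ C, x ≠ a → x ≠ b → (R a x ↔ R b x) ∧ (R x a ↔ R x b)) :
    (triangles (C \ {a}) R).ncard = (triangles (C \ {b}) R).ncard := by
  classical
  obtain rfl | hab := eq_or_ne a b
  · rfl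
  have himage : Equiv.swap a b '' (C \ {b}) = C \ {a} := by
    rw [Equiv.image_swap_of_mem_of_notMem (s := C \ {b}) ⟨ha, hab⟩ (fun h => h.2 rfl),
      Set.insert_sdiff_singleton, Set.insert_eq_of_mem hb]
  rw [← himage]
  refine ncard_triangles_image (Equiv.swap a b).injective.injOn ?_
  rintro x ⟨hxC, hxb⟩ y ⟨hyC, hyb⟩ hxy
  rw [Set.mem_singleton_iff] at hxb hyb
  obtain rfl | hxa := eq_or_ne x a
  · rw [Equiv.swap_apply_left, Equiv.swap_apply_of_ne_of_ne (Ne.symm hxy) hyb]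
    exact (htwin y hyC (Ne.symm hxy) hyb).1.symm
  obtain rfl | hya := eq_or_ne y a
  · rw [Equiv.swap_apply_left, Equiv.swap_apply_of_ne_of_ne hxa hxb]
    exact (htwin x hxC hxa hxb).2.symm
  rw [Equiv.swap_apply_of_ne_of_ne hxa hxb, Equiv.swap_apply_of_ne_of_ne hya hyb]

end Triangles

section Arcs

variable {m : ℕ} {a b c d x : ZMod m}

lemma InArc.ne_left (h : InArc a b x) : x ≠ a := by
  rintro rfl
  simp [InArc] at h

lemma InArc.ne_right (h : InArc a b x) : x ≠ b := by
  rintro rfl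
  exact lt_irrefl _ h.2

lemma InArc.ne (h : InArc a b x) : a ≠ b := by
  rintro rfl
  simp [InArc] at h

lemma CyclicOrd4.inArc_second (h : CyclicOrd4 a b c d) : InArc a d b :=
  ⟨h.1, h.2.1.trans h.2.2⟩

lemma CyclicOrd4.inArc_third (h : CyclicOrd4 a b c d) : InArc a d c :=
  ⟨h.1.trans h.2.1, h.2.2⟩

lemma CyclicOrd4.mk_ne (h : CyclicOrd4 a b c d) : s(a, d) ≠ s(b, c) := by
  intro e
  rcases Sym2.mem_iff.1 (e ▸ Sym2.mem_mk_left a d : a ∈ s(b, c)) with h' | h'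
  exacts [h.inArc_second.ne_left h'.symm, h.inArc_third.ne_left h'.symm]

variable [NeZero m]

lemma ZMod.val_sub_eq_ite (x a : ZMod m) :
    (x - a).val = if a.val ≤ x.val then x.val - a.val else x.val + m - a.val := by
  have := ZMod.val_lt x; have := ZMod.val_lt a
  rw [sub_eq_add_neg, ZMod.val_add, ZMod.neg_val', Nat.add_mod_mod]
  split_ifs with h
  · rw [show x.val + (m - a.val) = x.val - a.val + m by omega, Nat.add_mod_right,
      Nat.mod_eq_of_lt (by omega)]
  · rw [Nat.mod_eq_of_lt (by omega)]
    omega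

lemma ZMod.val_add_one_eq_ite (y : ZMod m) :
    (y + 1).val = if y.val + 1 = m then 0 else y.val + 1 := by
  have := ZMod.val_lt y
  rw [ZMod.val_add, ZMod.val_one_eq_one_mod, Nat.add_mod_mod]
  split_ifs with h
  · rw [h, Nat.mod_self]
  · exact Nat.mod_eq_of_lt (by omega)

lemma inArc_swap_iff (hab : a ≠ b) (hxa : x ≠ a) (hxb : x ≠ b) :
    InArc b a x ↔ ¬ InArc a b x := by
  rw [← (ZMod.val_injective m).ne_iff] at hab hxa hxb
  have := ZMod.val_lt a; have := ZMod.val_lt b; have := ZMod.val_lt x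
  simp only [InArc, ZMod.val_sub_eq_ite]
  split_ifs <;> omega

lemma inArc_add_one_iff (hxa : x ≠ a) (hxb : x + 1 ≠ b) :
    InArc a b (x + 1) ↔ InArc a b x := by
  rw [← (ZMod.val_injective m).ne_iff] at hxa hxb
  have := ZMod.val_lt a; have := ZMod.val_lt b; have := ZMod.val_lt x
  simp only [InArc, ZMod.val_sub_eq_ite, ZMod.val_add_one_eq_ite] at hxb ⊢
  split_ifs at hxb ⊢ <;> omega

lemma inArc_add_one_left_iff (hab : a ≠ b) :
    InArc (a + 1) b x ↔ InArc a b x ∧ x ≠ a + 1 := by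
  rw [← (ZMod.val_injective m).ne_iff] at hab ⊢
  have := ZMod.val_lt a; have := ZMod.val_lt b; have := ZMod.val_lt x
  simp only [InArc, ZMod.val_sub_eq_ite, ZMod.val_add_one_eq_ite]
  split_ifs <;> omega

lemma inArc_iff_inArc_add_one_right (h : b + 1 ≠ a) :
    InArc a b x ↔ InArc a (b + 1) x ∧ x ≠ b := by
  rw [← (ZMod.val_injective m).ne_iff] at h ⊢
  have := ZMod.val_lt a; have := ZMod.val_lt b; have := ZMod.val_lt x
  simp only [InArc, ZMod.val_sub_eq_ite, ZMod.val_add_one_eq_ite] at h ⊢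
  split_ifs at h ⊢ <;> omega

end Arcs

namespace Chord

variable {m : ℕ} [NeZero m] {a b c d i j : ZMod m}

lemma crosses_mk_iff (hab : a ≠ b) (hc : c ∉ s(a, b)) (hd : d ∉ s(a, b)) :
    Crosses s(a, b) s(c, d) ↔ Xor (InArc a b c) (InArc a b d) := by
  simp only [Sym2.mem_iff, not_or] at hc hd
  refine ⟨?_, fun h => ⟨a, b, c, d, rfl, rfl, h⟩⟩
  rintro ⟨a', b', c', d', he, hf, hx : Xor _ _⟩
  have hswap : Xor (InArc b a c) (InArc b a d) ↔ Xor (InArc a b c) (InArc a b d) := by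
    rw [inArc_swap_iff hab hc.1 hc.2, inArc_swap_iff hab hd.1 hd.2, xor_not_not]
  rw [Sym2.eq_iff] at he hf
  rcases he with ⟨rfl, rfl⟩ | ⟨rfl, rfl⟩ <;> rcases hf with ⟨rfl, rfl⟩ | ⟨rfl, rfl⟩
  · exact hx
  · rwa [xor_comm]
  · exact hswap.1 hx
  · rw [xor_comm] at hx
    exact hswap.1 hx

lemma _root_.CyclicOrd4.not_crosses (h : CyclicOrd4 a b c d) : ¬ Crosses s(a, d) s(b, c) := by
  have hb := h.inArc_second
  have hc := h.inArc_third
  rw [crosses_mk_iff hb.ne (by simp [hb.ne_left, hb.ne_right])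
    (by simp [hc.ne_left, hc.ne_right])]
  simp [hb, hc]

lemma crosses_strongRII_left_iff (h : CyclicOrd4 i (i + 1) j (j + 1))
    (hc : c ∉ s(i, j + 1)) (hc' : c ∉ s(i + 1, j)) (hd : d ∉ s(i, j + 1))
    (hd' : d ∉ s(i + 1, j)) :
    Crosses s(i, j + 1) s(c, d) ↔ Crosses s(i + 1, j) s(c, d) := by
  have hi := h.inArc_second
  have hj := h.inArc_third
  have hi1j : i + 1 ≠ j := fun e => by rw [e] at h; exact lt_irrefl _ h.2.1
  have harc : ∀ x, x ∉ s(i + 1, j) → (InArc i (j + 1) x ↔ InArc (i + 1) j x) := by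
    intro x hx
    simp only [Sym2.mem_iff, not_or] at hx
    rw [inArc_add_one_left_iff hj.ne_left.symm, inArc_iff_inArc_add_one_right hi.ne.symm]
    simp [hx.1, hx.2]
  rw [crosses_mk_iff hi.ne hc hd, crosses_mk_iff hi1j hc' hd', harc c hc', harc d hd']

lemma crosses_strongRII_right_iff (hcd : c ≠ d)
    (hc : c ∉ s(i, j + 1)) (hc' : c ∉ s(i + 1, j)) (hd : d ∉ s(i, j + 1))
    (hd' : d ∉ s(i + 1, j)) :
    Crosses s(c, d) s(i, j + 1) ↔ Crosses s(c, d) s(i + 1, j) := by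
  simp only [Sym2.mem_iff, not_or] at hc hc' hd hd'
  have hcd' : ∀ x, c ≠ x → d ≠ x → x ∉ s(c, d) := fun x h₁ h₂ => by
    simp [Ne.symm h₁, Ne.symm h₂]
  rw [crosses_mk_iff hcd (hcd' _ hc.1 hd.1) (hcd' _ hc.2 hd.2),
    crosses_mk_iff hcd (hcd' _ hc'.1 hd'.1) (hcd' _ hc'.2 hd'.2),
    inArc_add_one_iff (Ne.symm hc.1) (Ne.symm hd'.1),
    inArc_add_one_iff (Ne.symm hc'.2) (Ne.symm hd.2)]

end Chord

namespace ChordDiagram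

variable {n : ℕ} {D : ChordDiagram n}

lemma eq_mk_of_mem {e : Chord (2 * n)} {x : ZMod (2 * n)} (he : e ∈ D.chords) (hx : x ∈ e) :
    e = s(x, D.inv x) := by
  obtain ⟨y, rfl⟩ := he
  rcases Sym2.mem_iff.1 hx with rfl | rfl
  · rfl
  · rw [D.involutive, Sym2.eq_swap]

lemma eq_of_mem_of_mem {e f : Chord (2 * n)} {x : ZMod (2 * n)} (he : e ∈ D.chords)
    (hf : f ∈ D.chords) (hxe : x ∈ e) (hxf : x ∈ f) : e = f :=
  (eq_mk_of_mem he hxe).trans (eq_mk_of_mem hf hxf).symm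

lemma crosses_strongRII_iff [NeZero (2 * n)] {i j : ZMod (2 * n)} {γ : Chord (2 * n)}
    (hord : CyclicOrd4 i (i + 1) j (j + 1))
    (hα : s(i, j + 1) ∈ D.chords) (hβ : s(i + 1, j) ∈ D.chords) (hγ : γ ∈ D.chords)
    (hγα : γ ≠ s(i, j + 1)) (hγβ : γ ≠ s(i + 1, j)) :
    (Chord.Crosses s(i, j + 1) γ ↔ Chord.Crosses s(i + 1, j) γ) ∧
      (Chord.Crosses γ s(i, j + 1) ↔ Chord.Crosses γ s(i + 1, j)) := by
  have avoid : ∀ {e}, e ∈ D.chords → γ ≠ e → ∀ x ∈ γ, x ∉ e :=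
    fun he hne x hxγ hxe => hne (eq_of_mem_of_mem hγ he hxγ hxe)
  obtain ⟨c, rfl⟩ := hγ
  have hc := avoid hα hγα c (Sym2.mem_mk_left _ _)
  have hc' := avoid hβ hγβ c (Sym2.mem_mk_left _ _)
  have hd := avoid hα hγα (D.inv c) (Sym2.mem_mk_right _ _)
  have hd' := avoid hβ hγβ (D.inv c) (Sym2.mem_mk_right _ _)
  exact ⟨Chord.crosses_strongRII_left_iff hord hc hc' hd hd',
    Chord.crosses_strongRII_right_iff (D.fixedPointFree c).symm hc hc' hd hd'⟩

end ChordDiagram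

/-- deleting a strong RII pair `α = {i, j+1}`, `β = {i+1, j}` changes the
triple-chord count `T` by an even number. -/
theorem strong_RII_changes_T_by_even (n : ℕ) (D : ChordDiagram (n + 2)) (D' : ChordDiagram n)
    (i j : ZMod (2 * (n + 2)))
    (hord : CyclicOrd4 i (i + 1) j (j + 1))
    (hα : s(i, j + 1) ∈ D.chords) (hβ : s(i + 1, j) ∈ D.chords)
    (hdel : D.DeletionOf {s(i, j + 1), s(i + 1, j)} D') :
    D.T ≡ D'.T [MOD 2] := by
  obtain ⟨φ, hφ⟩ := hdel
  have hsplit := ncard_triangles_add_ncard_triangles_diff_pair (C := D.chords)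
    hord.mk_ne hord.not_crosses
  rw [ncard_triangles_diff_singleton_eq_of_twins hα hβ fun γ hγ hγα hγβ =>
      ChordDiagram.crosses_strongRII_iff hord hα hβ hγ hγα hγβ,
    ncard_triangles_congr (C := D.chords \ _) (C' := D'.chords) φ hφ] at hsplit
  change D.T + D'.T = _ at hsplit
  change D.T % 2 = D'.T % 2
  omega
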